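/- Let p be a prime, k ≥ 2 an integer, V a finite set with a map part : V → {1,…,k}, w : V × V → F_p a function, x ∈ F_p with x ≠ 0, and y : V × {1,…,k} → F_p such that for every v ∈ V, ∑_{j ≠ part(v)} y(v, j) = 0. For nodes a, b with part(a) = i ≠ j = part(b), define w'(a, b) = x·w(a, b) + y(a, j) + y(b, i). Then for every transversal (v_1, …, v_k) (i.e., part(v_i) = i for all i), one has ∑_{1 ≤ i < j ≤ k} w'(v_i, v_j) = 0 if and only if ∑_{1 ≤ i < j ≤ k} w(v_i, v_j) = 0. In particular, the set of exact (zero-weight) k-cliques with respect to w' equals that with respect to w whenever x ≠ 0. -/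

import Mathlib

/-! Summed over a transversal, the correction terms regroup by node as
`∑ᵢ ∑_{j ≠ i} y(vᵢ, j) = 0`, so the `w'`-weight is `x` times the `w`-weight,
and `x` is a unit in `𝔽_p`. -/

open Finset

section PairSums

variable {ι M : Type*} [Fintype ι] [LinearOrder ι] [AddCommMonoid M]

theorem sum_lt_add_swap_eq_sum_ne (f : ι → ι → M) :
    ∑ q ∈ univ.filter (fun q : ι × ι => q.1 < q.2), (f q.1 q.2 + f q.2 q.1)
      = ∑ q ∈ univ.filter (fun q : ι × ι => q.1 ≠ q.2), f q.1 q.2 := by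
  have hswap : ∑ q ∈ univ.filter (fun q : ι × ι => q.1 < q.2), f q.2 q.1
      = ∑ q ∈ univ.filter (fun q : ι × ι => q.2 < q.1), f q.1 q.2 :=
    sum_nbij' Prod.swap Prod.swap (by simp) (by simp) (by simp) (by simp) (by simp)
  have hdisj : Disjoint (univ.filter (fun q : ι × ι => q.1 < q.2))
      (univ.filter (fun q : ι × ι => q.2 < q.1)) :=
    disjoint_filter.2 fun q _ h h' => lt_asymm h h'
  rw [sum_add_distrib, hswap, ← sum_union hdisj, ← filter_or]
  simp only [← ne_iff_lt_or_gt]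

theorem sum_lt_add_swap_eq_zero (f : ι → ι → M)
    (hf : ∀ i, ∑ j ∈ univ.filter (fun j => j ≠ i), f i j = 0) :
    ∑ q ∈ univ.filter (fun q : ι × ι => q.1 < q.2), (f q.1 q.2 + f q.2 q.1) = 0 := by
  rw [sum_lt_add_swap_eq_sum_ne, sum_filter, Fintype.sum_prod_type]
  refine sum_eq_zero fun i _ => ?_
  calc _ = ∑ j ∈ univ.filter (fun j => j ≠ i), f i j := by
        rw [sum_filter]; exact sum_congr rfl fun j _ => if_congr ne_comm rfl rfl
    _ = 0 := hf i

end PairSums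

theorem hashed_weight_zero_iff (p : ℕ) [Fact p.Prime] (k : ℕ)
    (V : Type*) (part : V → Fin k)
    (w : V → V → ZMod p) (x : ZMod p) (hx : x ≠ 0)
    (y : V → Fin k → ZMod p)
    (hy : ∀ v : V, ∑ j ∈ Finset.univ.filter (fun j => j ≠ part v), y v j = 0)
    (v : Fin k → V) (hv : ∀ i, part (v i) = i) :
    (∑ q ∈ Finset.univ.filter (fun q : Fin k × Fin k => q.1 < q.2),
        (x * w (v q.1) (v q.2) + y (v q.1) (part (v q.2)) + y (v q.2) (part (v q.1))) = 0)
      ↔ (∑ q ∈ Finset.univ.filter (fun q : Fin k × Fin k => q.1 < q.2),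
          w (v q.1) (v q.2) = 0) := by
  have hcorrection := sum_lt_add_swap_eq_zero (fun i j => y (v i) j) fun i => by
    simpa only [hv] using hy (v i)
  simp only [hv, add_assoc, sum_add_distrib, hcorrection, add_zero, ← mul_sum]
  exact mul_eq_zero.trans (or_iff_right hx)
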